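/- arXiv:1402.0382 — 2 statements merged into one kernel-verified Lean document; each statement's English description precedes it below -/
import Mathlib

section
/- Let 𝓗 be a complex Hilbert space, H a bounded self-adjoint operator on 𝓗, and let P and R be bounded operators on 𝓗 such that R commutes with H (HR = RH). Then for every t ∈ ℝ, ‖[exp(−itH), P] R‖ ≤ |t| · ‖[H, P] R‖, where [A,B] := AB − BA denotes the commutator and exp(−itH) is the operator exponential of (−it)·H. -/
/-!
Duhamel's formula: for `U s = exp (-(i s) • H)` the map `s ↦ U s * Q * U (t - s)` runs from
`Q * U t` to `U t * Q` and has derivative `U s * [-iH, Q] * U (t - s)`, whose norm is `‖[H, Q]‖`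
because the `U s` are unitary; the mean value inequality gives `‖[U t, Q]‖ ≤ |t| ‖[H, Q]‖`.
Since `R` commutes with `H`, hence with `U t`, the cutoff is absorbed by taking `Q = P * R`.
-/

open NormedSpace

theorem Commute.mul_sub_mul_mul_right {R : Type*} [Ring R] {x r : R} (h : Commute x r) (p : R) :
    (x * p - p * x) * r = x * (p * r) - p * r * x := by
  rw [sub_mul, mul_assoc, mul_assoc p, h.eq, mul_assoc]

section Duhamel

variable {𝔸 : Type*} [NormedRing 𝔸] [NormedAlgebra ℝ 𝔸] [CompleteSpace 𝔸]

theorem hasDerivAt_exp_smul_mul_mul_exp_smul (a q : 𝔸) (t s : ℝ) :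
    HasDerivAt (fun s : ℝ => exp (s • a) * q * exp ((t - s) • a))
      (exp (s • a) * (a * q - q * a) * exp ((t - s) • a)) s := by
  have hleft := (hasDerivAt_exp_smul_const a s).mul_const q
  have hright : HasDerivAt (fun s : ℝ => exp ((t - s) • a)) (-(a * exp ((t - s) • a))) s := by
    simpa [Function.comp_def] using
      (hasDerivAt_exp_smul_const' a (t - s)).scomp s ((hasDerivAt_id s).const_sub t)
  refine (hleft.mul hright).congr_deriv ?_
  noncomm_ring

theorem norm_exp_smul_mul_sub_mul_exp_smul_le (a q : 𝔸) (ha : ∀ s : ℝ, ‖exp (s • a)‖ ≤ 1)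
    (t : ℝ) : ‖exp (t • a) * q - q * exp (t • a)‖ ≤ |t| * ‖a * q - q * a‖ := by
  have hderiv_le (s : ℝ) :
      ‖exp (s • a) * (a * q - q * a) * exp ((t - s) • a)‖ ≤ ‖a * q - q * a‖ :=
    calc _ ≤ ‖exp (s • a)‖ * ‖a * q - q * a‖ * ‖exp ((t - s) • a)‖ := norm_mul₃_le
      _ ≤ 1 * ‖a * q - q * a‖ * 1 := by gcongr <;> apply ha
      _ = ‖a * q - q * a‖ := by ring
  have := Convex.norm_image_sub_le_of_norm_hasDerivWithin_le
    (fun s _ => (hasDerivAt_exp_smul_mul_mul_exp_smul a q t s).hasDerivWithinAt)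
    (fun s _ => hderiv_le s) convex_univ (Set.mem_univ 0) (Set.mem_univ t)
  simpa [mul_comm |t|] using this

end Duhamel

theorem norm_exp_real_smul_le_one_of_mem_skewAdjoint {A : Type*} [CStarAlgebra A] {a : A}
    (ha : a ∈ skewAdjoint A) (s : ℝ) : ‖exp (s • a)‖ ≤ 1 := by
  let +nondep : NormedAlgebra ℚ A := .restrictScalars ℚ ℂ A
  have hU := exp_mem_unitary_of_mem_skewAdjoint (skewAdjoint.smul_mem s ha)
  rcases subsingleton_or_nontrivial A with hA | hA
  · simp [Subsingleton.elim (exp (s • a)) 0]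
  · exact (CStarRing.norm_of_mem_unitary hU).le

theorem IsSelfAdjoint.norm_exp_smul_mul_sub_mul_exp_smul_le {A : Type*} [CStarAlgebra A] {h : A}
    (hh : IsSelfAdjoint h) (q : A) (t : ℝ) :
    ‖NormedSpace.exp ((-(Complex.I * t)) • h) * q - q * NormedSpace.exp ((-(Complex.I * t)) • h)‖
      ≤ |t| * ‖h * q - q * h‖ := by
  have hskew : (-Complex.I) • h ∈ skewAdjoint A :=
    hh.smul_mem_skewAdjoint (by simp [skewAdjoint.mem_iff])
  have hsmul : (-(Complex.I * t)) • h = t • ((-Complex.I) • h) := by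
    rw [← Complex.coe_smul, smul_smul, mul_neg, mul_comm]
  have hcommutator :
      (-Complex.I) • h * q - q * (-Complex.I) • h = (-Complex.I) • (h * q - q * h) := by
    rw [smul_mul_assoc, mul_smul_comm, smul_sub]
  calc _ ≤ |t| * ‖(-Complex.I) • h * q - q * (-Complex.I) • h‖ := by
        rw [hsmul]
        exact _root_.norm_exp_smul_mul_sub_mul_exp_smul_le _ q
          (norm_exp_real_smul_le_one_of_mem_skewAdjoint hskew) t
    _ = |t| * ‖h * q - q * h‖ := by rw [hcommutator, norm_smul]; simp

/-- If `H` is a bounded self-adjoint operator on a complex Hilbert space, `P`, `R` are bounded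
operators and `R` commutes with `H`, then `‖[exp(−itH), P] R‖ ≤ |t| ⬝ ‖[H, P] R‖`. -/
theorem norm_commutator_exp_le {𝓗 : Type*} [NormedAddCommGroup 𝓗] [InnerProductSpace ℂ 𝓗]
    [CompleteSpace 𝓗] (H P R : 𝓗 →L[ℂ] 𝓗) (hH : IsSelfAdjoint H) (hR : H * R = R * H)
    (t : ℝ) :
    ‖(exp ((-(Complex.I * t)) • H) * P - P * exp ((-(Complex.I * t)) • H)) * R‖ ≤
      |t| * ‖(H * P - P * H) * R‖ := by
  have hHR : Commute H R := hR
  have hUR : Commute (exp ((-(Complex.I * t)) • H)) R := (hHR.smul_left _).exp_left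
  rw [hUR.mul_sub_mul_mul_right, hHR.mul_sub_mul_mul_right]
  exact hH.norm_exp_smul_mul_sub_mul_exp_smul_le (P * R) t
end

section
/- Let 𝓗 be a complex Hilbert space, H a bounded self-adjoint operator on 𝓗, and P an orthogonal projection on 𝓗. Suppose μ ∈ ℝ and ψ ∈ 𝓗 satisfy ‖ψ‖ = 1, Pψ = ψ, and ‖PHPψ − μψ‖ ≤ δ. Then dist(μ, σ(H)) ≤ δ + ‖[H, P] P‖, where σ(H) denotes the real spectrum of H and [A,B] := AB − BA. -/
/-!
If `Pψ = ψ`, then `Hψ - μψ = (PHPψ - μψ) + [H, P]Pψ`, so `ψ` is a quasimode of `H` with error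
at most `δ + ‖[H, P]P‖`. For self-adjoint `H` the continuous functional calculus gives
`(H - μ)² ≥ dist(μ, σ(H))²`, i.e. `‖(H - μ)ψ‖ ≥ dist(μ, σ(H)) ‖ψ‖`.
-/

theorem IsSelfAdjoint.algebraMap_infDist_sq_le {A : Type*} [CStarAlgebra A] [PartialOrder A]
    [StarOrderedRing A] {a : A} (ha : IsSelfAdjoint a) (μ : ℝ) :
    algebraMap ℝ A (Metric.infDist μ (spectrum ℝ a) ^ 2) ≤ (a - algebraMap ℝ A μ) ^ 2 := by
  have hcfc : cfc (fun x : ℝ ↦ (x - μ) ^ 2) a = (a - algebraMap ℝ A μ) ^ 2 := by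
    rw [cfc_pow _ _ a, cfc_sub _ _ a, cfc_id' ℝ a, cfc_const μ a]
  rw [← hcfc, ← cfc_const (Metric.infDist μ (spectrum ℝ a) ^ 2) a]
  refine cfc_mono fun x hx ↦ ?_
  have hdist : Metric.infDist μ (spectrum ℝ a) ≤ |x - μ| := by
    rw [← Real.dist_eq, dist_comm]; exact Metric.infDist_le_dist_of_mem hx
  simpa only [sq_abs] using pow_le_pow_left₀ Metric.infDist_nonneg hdist 2

theorem ContinuousLinearMap.mul_norm_sq_le_of_algebraMap_le {E : Type*}
    [NormedAddCommGroup E] [InnerProductSpace ℂ E] [CompleteSpace E] {T : E →L[ℂ] E} {c : ℝ}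
    (h : algebraMap ℝ (E →L[ℂ] E) c ≤ adjoint T * T) (x : E) : c * ‖x‖ ^ 2 ≤ ‖T x‖ ^ 2 := by
  have := ((ContinuousLinearMap.le_def _ _).mp h).re_inner_nonneg_left x
  rw [apply_norm_sq_eq_inner_adjoint_left]
  simpa [inner_sub_left, Algebra.algebraMap_eq_smul_one, real_inner_smul_left, inner_smul_left,
    ← Complex.coe_smul, ← Complex.ofReal_pow] using this

theorem IsSelfAdjoint.infDist_spectrum_mul_norm_le {E : Type*} [NormedAddCommGroup E]
    [InnerProductSpace ℂ E] [CompleteSpace E] {H : E →L[ℂ] E} (hH : IsSelfAdjoint H) (μ : ℝ)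
    (x : E) : Metric.infDist μ (spectrum ℝ H) * ‖x‖ ≤ ‖H x - (μ : ℂ) • x‖ := by
  set T := H - algebraMap ℝ (E →L[ℂ] E) μ
  have hT : IsSelfAdjoint T := hH.sub (.algebraMap _ (.all μ))
  have hsq : Metric.infDist μ (spectrum ℝ H) ^ 2 * ‖x‖ ^ 2 ≤ ‖T x‖ ^ 2 := by
    refine ContinuousLinearMap.mul_norm_sq_le_of_algebraMap_le ?_ x
    rw [hT.adjoint_eq, ← pow_two]
    exact hH.algebraMap_infDist_sq_le μ
  have hTx : T x = H x - (μ : ℂ) • x := by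
    simp [T, Algebra.algebraMap_eq_smul_one, ← Complex.coe_smul]
  rw [← mul_pow] at hsq
  rw [← hTx]
  exact (pow_le_pow_iff_left₀ (mul_nonneg Metric.infDist_nonneg (norm_nonneg _)) (norm_nonneg _)
    two_ne_zero).mp hsq

theorem ContinuousLinearMap.norm_apply_sub_smul_le_compression_add_commutator {𝕜 E : Type*}
    [NontriviallyNormedField 𝕜] [NormedAddCommGroup E] [NormedSpace 𝕜 E] (H P : E →L[𝕜] E)
    (c : 𝕜) {ψ : E} (hPψ : P ψ = ψ) :
    ‖H ψ - c • ψ‖ ≤ ‖(P * H * P) ψ - c • ψ‖ + ‖(H * P - P * H) * P‖ * ‖ψ‖ := by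
  have hsplit : H ψ - c • ψ = ((P * H * P) ψ - c • ψ) + ((H * P - P * H) * P) ψ := by
    simp only [sub_apply, mul_apply_eq_comp, hPψ]
    abel
  rw [hsplit]
  refine (norm_add_le _ _).trans ?_
  gcongr
  exact le_opNorm _ _

theorem dist_spectrum_le_of_compressed_quasimode_general {𝓗 : Type*} [NormedAddCommGroup 𝓗]
    [InnerProductSpace ℂ 𝓗] [CompleteSpace 𝓗] (H P : 𝓗 →L[ℂ] 𝓗)
    (hH : IsSelfAdjoint H) (μ : ℝ) (δ : ℝ) (ψ : 𝓗) (hψ : ‖ψ‖ = 1) (hPψ : P ψ = ψ)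
    (hquasi : ‖(P * H * P) ψ - (μ : ℂ) • ψ‖ ≤ δ) :
    Metric.infDist μ {lam : ℝ | (lam : ℂ) ∈ spectrum ℂ H} ≤
      δ + ‖(H * P - P * H) * P‖ := by
  -- `spectrum ℝ H` unfolds to the set of reals `lam` with `(lam : ℂ) ∈ spectrum ℂ H`.
  calc Metric.infDist μ (spectrum ℝ H)
      = Metric.infDist μ (spectrum ℝ H) * ‖ψ‖ := by rw [hψ, mul_one]
    _ ≤ ‖H ψ - (μ : ℂ) • ψ‖ := hH.infDist_spectrum_mul_norm_le μ ψ
    _ ≤ ‖(P * H * P) ψ - (μ : ℂ) • ψ‖ + ‖(H * P - P * H) * P‖ * ‖ψ‖ :=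
      H.norm_apply_sub_smul_le_compression_add_commutator P _ hPψ
    _ ≤ δ + ‖(H * P - P * H) * P‖ := by rw [hψ, mul_one]; gcongr

/-- Abstract mechanism of Corollary 2.4: a normalised approximate eigenvector of the compressed
operator `PHP` lying in the range of the orthogonal projection `P` is a quasimode for `H`
itself up to the commutator error, hence
`dist(μ, σ(H)) ≤ δ + ‖[H, P] P‖`. -/
theorem dist_spectrum_le_of_compressed_quasimode {𝓗 : Type*} [NormedAddCommGroup 𝓗]
    [InnerProductSpace ℂ 𝓗] [CompleteSpace 𝓗] (H P : 𝓗 →L[ℂ] 𝓗)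
    (hH : IsSelfAdjoint H) (hP_sa : IsSelfAdjoint P) (hP_idem : P * P = P)
    (μ : ℝ) (δ : ℝ) (ψ : 𝓗) (hψ : ‖ψ‖ = 1) (hPψ : P ψ = ψ)
    (hquasi : ‖(P * H * P) ψ - (μ : ℂ) • ψ‖ ≤ δ) :
    Metric.infDist μ {lam : ℝ | (lam : ℂ) ∈ spectrum ℂ H} ≤
      δ + ‖(H * P - P * H) * P‖ :=
  dist_spectrum_le_of_compressed_quasimode_general H P hH μ δ ψ hψ hPψ hquasi
end
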